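/- arXiv:1112.6018 — 4 statements merged into one kernel-verified Lean document; each statement's English description precedes it below -/
import Mathlib

section
/- Let A be a block matrix given by quasiseparable generators. Define Q_1 = q_1, Q_k = [a_k Q_{k-1} q_k] (horizontal concatenation) for k ≥ 2; P_n = p_n, P_k = [p_k ; P_{k+1} a_k] (vertical concatenation) for k ≤ n−1; G_1 = g_1, G_k = [G_{k-1} b_k ; g_k]; H_n = h_n, H_k = [h_k b_k H_{k+1}]. Then for every block index K corresponding to k, the lower-left submatrix A(K+1:N, 1:K) equals P_{k+1} Q_k and the upper-right submatrix A(1:K, K+1:N) equals G_k H_{k+1}. -/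
open Matrix

/-- Offset of the `k`-th block (0-based) in the scalar indexing: `ofs m k = n₁+⋯+n_k`. -/
def ofs (m : ℕ → ℕ) (k : ℕ) : ℕ := ∑ i ∈ Finset.range k, m i

lemma ofs_le {m : ℕ → ℕ} {i n : ℕ} (h : i ≤ n) : ofs m i ≤ ofs m n := by
  apply Finset.sum_le_sum_of_subset
  intro x hx
  simp only [Finset.mem_range] at *
  omega

lemma ofs_lt {m : ℕ → ℕ} {i n : ℕ} (hi : i < n) (s : Fin (m i)) :
    ofs m i + (s : ℕ) < ofs m n := by
  have h1 : ofs m i + (s : ℕ) < ofs m (i + 1) := by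
    have hs := s.isLt
    simp only [ofs, Finset.sum_range_succ]
    omega
  have h2 : ofs m (i + 1) ≤ ofs m n := ofs_le hi
  omega

/-- The "transfer" product `a_{j+e} ⋯ a_{j+1} q_j` of lower quasiseparable generators. -/
def lowT {F : Type} [Field F] (rl m : ℕ → ℕ)
    (q : ∀ k : ℕ, Matrix (Fin (rl k)) (Fin (m k)) F)
    (a : ∀ k : ℕ, Matrix (Fin (rl k)) (Fin (rl (k - 1))) F)
    (j : ℕ) : (e : ℕ) → Matrix (Fin (rl (j + e))) (Fin (m j)) F
  | 0 => q j
  | e + 1 =>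
    (show Matrix (Fin (rl (j + e + 1))) (Fin (rl (j + e))) F from a (j + e + 1)) *
      lowT rl m q a j e

/-- The "transfer" product `g_i b_{i+1} ⋯ b_{i+e}` of upper quasiseparable generators. -/
def upT {F : Type} [Field F] (ru m : ℕ → ℕ)
    (g : ∀ k : ℕ, Matrix (Fin (m k)) (Fin (ru k)) F)
    (b : ∀ k : ℕ, Matrix (Fin (ru (k - 1))) (Fin (ru k)) F)
    (i : ℕ) : (e : ℕ) → Matrix (Fin (m i)) (Fin (ru (i + e))) F
  | 0 => g i
  | e + 1 =>
    upT ru m g b i e *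
      (show Matrix (Fin (ru (i + e))) (Fin (ru (i + e + 1))) F from b (i + e + 1))

/-! Unrolling the recurrences, the block-column `j` of `Q_{k}` is the transfer product
`a_k ⋯ a_{j+1} q_j` and the block-row `i` of `P_k` is `p_i a_{i-1} ⋯ a_k`. Hence
`Pb i k * Qb (k-1) j` does not depend on the cut `k` (each step moves one `a` from one factor
to the other), and at `k = i` it is `p_i a_{i-1} ⋯ a_{j+1} q_j = A_{ij}`. The upper part is the
mirror image. -/

section Lower

variable {m rl : ℕ → ℕ}

theorem accumQ_eq_lowT {F : Type} [Field F]
    {q : ∀ k : ℕ, Matrix (Fin (rl k)) (Fin (m k)) F}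
    {a : ∀ k : ℕ, Matrix (Fin (rl k)) (Fin (rl (k - 1))) F}
    {Qb : ∀ k j : ℕ, Matrix (Fin (rl k)) (Fin (m j)) F}
    (hQ0 : ∀ k : ℕ, Qb k k = q k)
    (hQrec : ∀ k j : ℕ, j ≤ k → Qb (k + 1) j =
      (show Matrix (Fin (rl (k + 1))) (Fin (rl k)) F from a (k + 1)) * Qb k j)
    (j e : ℕ) : Qb (j + e) j = lowT rl m q a j e := by
  induction e with
  | zero => exact hQ0 j
  | succ e ih =>
    show Qb (j + e + 1) j = _
    rw [hQrec (j + e) j (by omega), ih]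
    rfl

theorem accumQ_eq_lowT_cast {F : Type} [Field F]
    {q : ∀ k : ℕ, Matrix (Fin (rl k)) (Fin (m k)) F}
    {a : ∀ k : ℕ, Matrix (Fin (rl k)) (Fin (rl (k - 1))) F}
    {Qb : ∀ k j : ℕ, Matrix (Fin (rl k)) (Fin (m j)) F}
    (hQ0 : ∀ k : ℕ, Qb k k = q k)
    (hQrec : ∀ k j : ℕ, j ≤ k → Qb (k + 1) j =
      (show Matrix (Fin (rl (k + 1))) (Fin (rl k)) F from a (k + 1)) * Qb k j)
    {j e K : ℕ} (hK : K = j + e) :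
    Qb K j = (lowT rl m q a j e).submatrix (Fin.cast (congrArg rl hK)) id := by
  subst hK
  simpa using accumQ_eq_lowT hQ0 hQrec j e

theorem accumP_mul_accumQ_eq {R : Type*} [Semiring R]
    {a : ∀ k : ℕ, Matrix (Fin (rl k)) (Fin (rl (k - 1))) R}
    {Qb : ∀ k j : ℕ, Matrix (Fin (rl k)) (Fin (m j)) R}
    {Pb : ∀ i k : ℕ, Matrix (Fin (m i)) (Fin (rl (k - 1))) R}
    (hQrec : ∀ k j : ℕ, j ≤ k → Qb (k + 1) j =
      (show Matrix (Fin (rl (k + 1))) (Fin (rl k)) R from a (k + 1)) * Qb k j)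
    (hPrec : ∀ i k : ℕ, k < i → Pb i k =
      (show Matrix (Fin (m i)) (Fin (rl k)) R from Pb i (k + 1)) * a k)
    {i j k : ℕ} (hjk : j < k) (hki : k ≤ i) :
    Pb i k * Qb (k - 1) j = Pb i i * Qb (i - 1) j := by
  obtain ⟨e, he⟩ := Nat.exists_eq_add_of_le hki
  induction e generalizing k with
  | zero => subst he; rfl
  | succ e ih =>
    obtain ⟨K, rfl⟩ : ∃ K, k = K + 1 := ⟨k - 1, by omega⟩
    calc Pb i (K + 1) * Qb (K + 1 - 1) j
        = (show Matrix (Fin (m i)) (Fin (rl (K + 1))) R from Pb i (K + 2)) * Qb (K + 1) j := by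
          rw [hPrec i (K + 1) (by omega), hQrec K j (by omega), Matrix.mul_assoc]; rfl
      _ = Pb i i * Qb (i - 1) j := ih (k := K + 2) (by omega) (by omega) (by omega)

end Lower

section Upper

variable {m ru : ℕ → ℕ}

theorem accumG_eq_upT {F : Type} [Field F]
    {g : ∀ k : ℕ, Matrix (Fin (m k)) (Fin (ru k)) F}
    {b : ∀ k : ℕ, Matrix (Fin (ru (k - 1))) (Fin (ru k)) F}
    {Gb : ∀ k j : ℕ, Matrix (Fin (m j)) (Fin (ru k)) F}
    (hG0 : ∀ k : ℕ, Gb k k = g k)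
    (hGrec : ∀ k j : ℕ, j ≤ k → Gb (k + 1) j =
      Gb k j * (show Matrix (Fin (ru k)) (Fin (ru (k + 1))) F from b (k + 1)))
    (i e : ℕ) : Gb (i + e) i = upT ru m g b i e := by
  induction e with
  | zero => exact hG0 i
  | succ e ih =>
    show Gb (i + e + 1) i = _
    rw [hGrec (i + e) i (by omega), ih]
    rfl

theorem accumG_eq_upT_cast {F : Type} [Field F]
    {g : ∀ k : ℕ, Matrix (Fin (m k)) (Fin (ru k)) F}
    {b : ∀ k : ℕ, Matrix (Fin (ru (k - 1))) (Fin (ru k)) F}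
    {Gb : ∀ k j : ℕ, Matrix (Fin (m j)) (Fin (ru k)) F}
    (hG0 : ∀ k : ℕ, Gb k k = g k)
    (hGrec : ∀ k j : ℕ, j ≤ k → Gb (k + 1) j =
      Gb k j * (show Matrix (Fin (ru k)) (Fin (ru (k + 1))) F from b (k + 1)))
    {i e K : ℕ} (hK : K = i + e) :
    Gb K i = (upT ru m g b i e).submatrix id (Fin.cast (congrArg ru hK)) := by
  subst hK
  simpa using accumG_eq_upT hG0 hGrec i e

theorem accumG_mul_accumH_eq {R : Type*} [Semiring R]
    {b : ∀ k : ℕ, Matrix (Fin (ru (k - 1))) (Fin (ru k)) R}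
    {Gb : ∀ k j : ℕ, Matrix (Fin (m j)) (Fin (ru k)) R}
    {Hb : ∀ k j : ℕ, Matrix (Fin (ru (k - 1))) (Fin (m j)) R}
    (hGrec : ∀ k j : ℕ, j ≤ k → Gb (k + 1) j =
      Gb k j * (show Matrix (Fin (ru k)) (Fin (ru (k + 1))) R from b (k + 1)))
    (hHrec : ∀ k j : ℕ, k < j → Hb k j =
      b k * (show Matrix (Fin (ru k)) (Fin (m j)) R from Hb (k + 1) j))
    {i j k : ℕ} (hik : i < k) (hkj : k ≤ j) :
    Gb (k - 1) i * Hb k j = Gb (j - 1) i * Hb j j := by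
  obtain ⟨e, he⟩ := Nat.exists_eq_add_of_le hkj
  induction e generalizing k with
  | zero => subst he; rfl
  | succ e ih =>
    obtain ⟨K, rfl⟩ : ∃ K, k = K + 1 := ⟨k - 1, by omega⟩
    calc Gb (K + 1 - 1) i * Hb (K + 1) j
        = Gb (K + 1) i * (show Matrix (Fin (ru (K + 1))) (Fin (m j)) R from Hb (K + 2) j) := by
          rw [hHrec (K + 1) j (by omega), hGrec K i (by omega), Matrix.mul_assoc]; rfl
      _ = Gb (j - 1) i * Hb j j := ih (k := K + 2) (by omega) (by omega) (by omega)

end Upper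

/-- Blockwise, 0-based encoding: `Qb k j` is block-column `j` of `Q_k`, `Pb i k` block-row `i`
of `P_k`, `Gb k i` block-row `i` of `G_k` and `Hb k j` block-column `j` of `H_k`. -/
theorem qs_lowrank_factors {F : Type} [Field F]
    (n : ℕ) (m rl ru : ℕ → ℕ)
    (q : ∀ k : ℕ, Matrix (Fin (rl k)) (Fin (m k)) F)
    (a : ∀ k : ℕ, Matrix (Fin (rl k)) (Fin (rl (k - 1))) F)
    (p : ∀ k : ℕ, Matrix (Fin (m k)) (Fin (rl (k - 1))) F)
    (g : ∀ k : ℕ, Matrix (Fin (m k)) (Fin (ru k)) F)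
    (b : ∀ k : ℕ, Matrix (Fin (ru (k - 1))) (Fin (ru k)) F)
    (h : ∀ k : ℕ, Matrix (Fin (ru (k - 1))) (Fin (m k)) F)
    (A : Matrix (Fin (ofs m n)) (Fin (ofs m n)) F)
    (hlow : ∀ (i j : ℕ) (hj : j < i) (hi : i < n) (s : Fin (m i)) (t : Fin (m j)),
      A ⟨ofs m i + s, ofs_lt hi s⟩ ⟨ofs m j + t, ofs_lt (hj.trans hi) t⟩ =
        (p i * (lowT rl m q a j (i - 1 - j)).submatrix
            (Fin.cast (congrArg rl (by omega : i - 1 = j + (i - 1 - j)))) id) s t)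
    (hup : ∀ (i j : ℕ) (hij : i < j) (hj : j < n) (s : Fin (m i)) (t : Fin (m j)),
      A ⟨ofs m i + s, ofs_lt (hij.trans hj) s⟩ ⟨ofs m j + t, ofs_lt hj t⟩ =
        ((upT ru m g b i (j - 1 - i)).submatrix id
            (Fin.cast (congrArg ru (by omega : j - 1 = i + (j - 1 - i)))) * h j) s t)
    (Qb : ∀ k j : ℕ, Matrix (Fin (rl k)) (Fin (m j)) F)
    (Pb : ∀ i k : ℕ, Matrix (Fin (m i)) (Fin (rl (k - 1))) F)
    (Gb : ∀ k j : ℕ, Matrix (Fin (m j)) (Fin (ru k)) F)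
    (Hb : ∀ k j : ℕ, Matrix (Fin (ru (k - 1))) (Fin (m j)) F)
    (hQ0 : ∀ k : ℕ, Qb k k = q k)
    (hQrec : ∀ k j : ℕ, j ≤ k → Qb (k + 1) j =
      (show Matrix (Fin (rl (k + 1))) (Fin (rl k)) F from a (k + 1)) * Qb k j)
    (hP0 : ∀ k : ℕ, Pb k k = p k)
    (hPrec : ∀ i k : ℕ, k < i → Pb i k =
      (show Matrix (Fin (m i)) (Fin (rl k)) F from Pb i (k + 1)) * a k)
    (hG0 : ∀ k : ℕ, Gb k k = g k)
    (hGrec : ∀ k j : ℕ, j ≤ k → Gb (k + 1) j =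
      Gb k j * (show Matrix (Fin (ru k)) (Fin (ru (k + 1))) F from b (k + 1)))
    (hH0 : ∀ k : ℕ, Hb k k = h k)
    (hHrec : ∀ k j : ℕ, k < j → Hb k j =
      b k * (show Matrix (Fin (ru k)) (Fin (m j)) F from Hb (k + 1) j)) :
    ∀ (k : ℕ) (hk1 : 1 ≤ k) (hk : k < n),
      (∀ (i j : ℕ) (hj : j < k) (hik : k ≤ i) (hi : i < n)
          (s : Fin (m i)) (t : Fin (m j)),
        A ⟨ofs m i + s, ofs_lt hi s⟩ ⟨ofs m j + t, ofs_lt (by omega) t⟩ =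
          (Pb i k * Qb (k - 1) j) s t) ∧
      (∀ (i j : ℕ) (hik : i < k) (hkj : k ≤ j) (hj : j < n)
          (s : Fin (m i)) (t : Fin (m j)),
        A ⟨ofs m i + s, ofs_lt (by omega) s⟩ ⟨ofs m j + t, ofs_lt hj t⟩ =
          (Gb (k - 1) i * Hb k j) s t) := by
  intro k _ _
  refine ⟨fun i j hj hik hi s t => ?_, fun i j hik hkj hj s t => ?_⟩
  · rw [hlow i j (by omega) hi s t, accumP_mul_accumQ_eq hQrec hPrec hj hik, hP0,
      accumQ_eq_lowT_cast hQ0 hQrec (by omega : i - 1 = j + (i - 1 - j))]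
  · rw [hup i j (by omega) hj s t, accumG_mul_accumH_eq hGrec hHrec hik hkj, hH0,
      accumG_eq_upT_cast hG0 hGrec (by omega : j - 1 = i + (j - 1 - i))]
end

section
/- Let A be an invertible N×N matrix over a field. Then for every K with 1 ≤ K < N, the rank of the off-diagonal block A^{-1}(K+1:N, 1:K) of the inverse equals the rank of the corresponding off-diagonal block A(K+1:N, 1:K) of A. In particular, the class of (r^l, r^u)-quasiseparable matrices (in the rank sense) is closed under inversion. -/
open Matrix

/-- The strictly lower-left off-diagonal submatrix `A(K+1:N, 1:K)`. -/
def lowBlk {F : Type} [Field F] {N : ℕ} (A : Matrix (Fin N) (Fin N) F) (K : ℕ)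
    (hK : K ≤ N) : Matrix (Fin (N - K)) (Fin K) F :=
  Matrix.of fun i j => A ⟨K + i.1, by have := i.isLt; omega⟩ ⟨j.1, by have := j.isLt; omega⟩

/-- The strictly upper-right off-diagonal submatrix `A(1:K, K+1:N)`. -/
def upBlk {F : Type} [Field F] {N : ℕ} (A : Matrix (Fin N) (Fin N) F) (K : ℕ)
    (hK : K ≤ N) : Matrix (Fin K) (Fin (N - K)) F :=
  Matrix.of fun i j => A ⟨i.1, by have := i.isLt; omega⟩ ⟨K + j.1, by have := j.isLt; omega⟩

/-- `A` is `(rl, ru)`-quasiseparable in the rank sense. -/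
def IsQS {F : Type} [Field F] {N : ℕ} (A : Matrix (Fin N) (Fin N) F) (rl ru : ℕ) : Prop :=
  ∀ (K : ℕ) (_ : 1 ≤ K) (h2 : K < N),
    (lowBlk A K h2.le).rank ≤ rl ∧ (upBlk A K h2.le).rank ≤ ru

/-!
Let `V ⊆ F^N` be the span of the first `K` coordinate vectors and `P` the projection onto the last
`N - K` coordinates, so `V = ker P` and the lower-left block of `A` represents `P ∘ A` restricted to
`V`. Rank–nullity gives `rank A(K+1:N, 1:K) = dim V - dim (V ∩ A⁻¹ V)`, and `A` maps `V ∩ A⁻¹ V`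
isomorphically onto `A V ∩ V`, so the right-hand side does not change when `A` is replaced by `A⁻¹`.
The upper-right blocks are handled by the same argument with the roles of rows and columns swapped.
-/

open Module Submodule LinearMap

section NullityTheorem

variable {F M W : Type*} [Field F] [AddCommGroup M] [Module F M] [AddCommGroup W] [Module F W]

theorem finrank_map_comp_add_finrank_inf_map_symm (P : M →ₗ[F] W) [FiniteDimensional F (ker P)]
    (φ : M ≃ₗ[F] M) :
    finrank F ↥(map (P ∘ₗ φ.toLinearMap) (ker P))
        + finrank F ↥(ker P ⊓ map φ.symm.toLinearMap (ker P))
      = finrank F ↥(ker P) := by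
  have hker : ker ((P ∘ₗ φ.toLinearMap).domRestrict (ker P))
      ≃ₗ[F] ↥(ker P ⊓ map φ.symm.toLinearMap (ker P)) := by
    rw [ker_domRestrict, ker_comp, comap_equiv_eq_map_symm, ← map_comap_subtype]
    exact equivSubtypeMap _ _
  rw [← hker.finrank_eq, ← range_domRestrict]
  exact finrank_range_add_finrank_ker _

theorem finrank_inf_map_symm (V : Submodule F M) (φ : M ≃ₗ[F] M) :
    finrank F ↥(V ⊓ map φ.symm.toLinearMap V) = finrank F ↥(V ⊓ map φ.toLinearMap V) := by
  rw [← φ.finrank_map_eq, map_inf _ φ.injective, ← map_comp, φ.comp_symm, Submodule.map_id,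
    inf_comm]

theorem finrank_map_comp_symm (P : M →ₗ[F] W) [FiniteDimensional F (ker P)] (φ : M ≃ₗ[F] M) :
    finrank F ↥(map (P ∘ₗ φ.symm.toLinearMap) (ker P))
      = finrank F ↥(map (P ∘ₗ φ.toLinearMap) (ker P)) := by
  have h := finrank_map_comp_add_finrank_inf_map_symm P φ
  have h' := finrank_map_comp_add_finrank_inf_map_symm P φ.symm
  rw [φ.symm_symm, ← finrank_inf_map_symm] at h'
  omega

end NullityTheorem

namespace Matrix

variable {F : Type*} [Field F] {l m n k : Type*}

theorem mulVecLin_submatrix_of_injective [Fintype n] [Fintype k] (A : Matrix m n F) (r : l → m)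
    {c : k → n} (hc : Function.Injective c) :
    (A.submatrix r c).mulVecLin
      = funLeft F F r ∘ₗ A.mulVecLin ∘ₗ Function.ExtendByZero.linearMap F c := by
  ext x i
  simp only [mulVecLin_apply, coe_comp, Function.comp_apply, funLeft_apply,
    Function.ExtendByZero.linearMap_apply, mulVec, dotProduct, submatrix_apply]
  refine Fintype.sum_of_injective c hc _ _ (fun j hj => ?_) (fun j => by rw [hc.extend_apply])
  rw [Function.extend_apply' _ _ _ hj, Pi.zero_apply, mul_zero]

theorem range_extendByZero_eq_ker_funLeft {r : m → n} {c : k → n} (hc : Function.Injective c)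
    (hrc : IsCompl (Set.range r) (Set.range c)) :
    range (Function.ExtendByZero.linearMap F c) = ker (funLeft F F r) := by
  ext v
  simp only [mem_range, mem_ker]
  constructor
  · rintro ⟨x, rfl⟩
    funext i
    exact Function.extend_apply' _ _ _
      fun ⟨j, hj⟩ => hrc.disjoint.ne_of_mem (Set.mem_range_self i) ⟨j, hj⟩ rfl
  · intro hv
    refine ⟨v ∘ c, funext fun a => ?_⟩
    by_cases ha : a ∈ Set.range c
    · obtain ⟨j, rfl⟩ := ha
      exact hc.extend_apply _ _ _
    · obtain ⟨i, rfl⟩ := hrc.symm.compl_eq.le ha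
      exact (Function.extend_apply' _ _ _ ha).trans (congrFun hv i).symm

theorem rank_submatrix_eq_finrank_map_ker [Fintype n] [Fintype k] (A : Matrix n n F) (r : m → n)
    {c : k → n} (hc : Function.Injective c) (hrc : IsCompl (Set.range r) (Set.range c)) :
    (A.submatrix r c).rank
      = finrank F (Submodule.map (funLeft F F r ∘ₗ A.mulVecLin) (ker (funLeft F F r))) := by
  rw [rank, mulVecLin_submatrix_of_injective _ r hc, range_comp, range_comp,
    range_extendByZero_eq_ker_funLeft hc hrc, map_comp]

theorem rank_submatrix_nonsing_inv [Fintype n] [DecidableEq n] [Fintype k] (A : Matrix n n F)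
    (hA : IsUnit A.det) (r : m → n) {c : k → n} (hc : Function.Injective c)
    (hrc : IsCompl (Set.range r) (Set.range c)) :
    (A⁻¹.submatrix r c).rank = (A.submatrix r c).rank := by
  let φ : (n → F) ≃ₗ[F] n → F := LinearEquiv.ofLinearMap A.mulVecLin A⁻¹.mulVecLin
    (by rw [← mulVecLin_mul, mul_nonsing_inv A hA, mulVecLin_one])
    (by rw [← mulVecLin_mul, nonsing_inv_mul A hA, mulVecLin_one])
  rw [rank_submatrix_eq_finrank_map_ker _ r hc hrc, rank_submatrix_eq_finrank_map_ker _ r hc hrc]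
  exact finrank_map_comp_symm (funLeft F F r) φ

end Matrix

namespace Fin

def natAddOfLE {N K : ℕ} (hK : K ≤ N) : Fin (N - K) → Fin N :=
  fun i => ⟨K + i, by omega⟩

theorem natAddOfLE_injective {N K : ℕ} (hK : K ≤ N) : Function.Injective (natAddOfLE hK) :=
  fun i j h => Fin.ext (by simpa [natAddOfLE] using congrArg Fin.val h)

theorem isCompl_range_natAddOfLE_range_castLE {N K : ℕ} (hK : K ≤ N) :
    IsCompl (Set.range (natAddOfLE hK)) (Set.range (castLE hK)) := by
  constructor
  · rw [Set.disjoint_left]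
    rintro _ ⟨i, rfl⟩ ⟨j, hj⟩
    have := congrArg Fin.val hj
    simp only [val_castLE, natAddOfLE] at this
    omega
  · rw [codisjoint_iff, Set.top_eq_univ, Set.eq_univ_iff_forall]
    intro a
    by_cases ha : a.val < K
    · exact Or.inr ⟨⟨a, ha⟩, rfl⟩
    · exact Or.inl ⟨⟨a - K, by omega⟩, Fin.ext (by simp [natAddOfLE]; omega)⟩

end Fin

theorem lowBlk_eq_submatrix {F : Type} [Field F] {N : ℕ} (A : Matrix (Fin N) (Fin N) F) (K : ℕ)
    (hK : K ≤ N) : lowBlk A K hK = A.submatrix (Fin.natAddOfLE hK) (Fin.castLE hK) :=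
  rfl

theorem upBlk_eq_submatrix {F : Type} [Field F] {N : ℕ} (A : Matrix (Fin N) (Fin N) F) (K : ℕ)
    (hK : K ≤ N) : upBlk A K hK = A.submatrix (Fin.castLE hK) (Fin.natAddOfLE hK) :=
  rfl

/-- for an invertible matrix, the ranks of the lower-left off-diagonal
blocks of the inverse equal those of the matrix itself; in particular the class of
`(rl, ru)`-quasiseparable matrices is closed under inversion. -/
theorem inv_offdiag_rank {F : Type} [Field F] {N : ℕ}
    (A : Matrix (Fin N) (Fin N) F) (hA : IsUnit A.det) :
    (∀ (K : ℕ) (_ : 1 ≤ K) (h2 : K < N),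
      (lowBlk A⁻¹ K h2.le).rank = (lowBlk A K h2.le).rank) ∧
    (∀ rl ru : ℕ, IsQS A rl ru → IsQS A⁻¹ rl ru) := by
  have rank_lowBlk_inv (K : ℕ) (hK : K ≤ N) : (lowBlk A⁻¹ K hK).rank = (lowBlk A K hK).rank := by
    rw [lowBlk_eq_submatrix, lowBlk_eq_submatrix]
    exact A.rank_submatrix_nonsing_inv hA _ (Fin.castLE_injective hK)
      (Fin.isCompl_range_natAddOfLE_range_castLE hK)
  have rank_upBlk_inv (K : ℕ) (hK : K ≤ N) : (upBlk A⁻¹ K hK).rank = (upBlk A K hK).rank := by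
    rw [upBlk_eq_submatrix, upBlk_eq_submatrix]
    exact A.rank_submatrix_nonsing_inv hA _ (Fin.natAddOfLE_injective hK)
      (Fin.isCompl_range_natAddOfLE_range_castLE hK).symm
  refine ⟨fun K _ h2 => rank_lowBlk_inv K h2.le, fun rl ru hQS K h1 h2 => ?_⟩
  rw [rank_lowBlk_inv, rank_upBlk_inv]
  exact hQS K h1 h2
end

section
/- Let A = LU be an LU factorization of an invertible strongly regular N×N matrix A, with L unit lower triangular and U upper triangular. Then for every K with 1 ≤ K < N, rank L(K+1:N, 1:K) = rank A(K+1:N, 1:K) and rank U(1:K, K+1:N) = rank A(1:K, K+1:N). Consequently if A is (r^l, r^u)-quasiseparable then L is (r^l, 0)-quasiseparable and U is (0, r^u)-quasiseparable. -/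
/-!
Since `U` is upper triangular, the first `K` columns of `A = L * U` only involve the first `K`
columns of `L`, so `A(K+1:N, 1:K) = L(K+1:N, 1:K) * U(1:K, 1:K)`; symmetrically
`A(1:K, K+1:N) = L(1:K, 1:K) * U(1:K, K+1:N)` and `A(1:K, 1:K) = L(1:K, 1:K) * U(1:K, 1:K)`.
Strong regularity makes the last determinant nonzero, so both leading blocks of `L` and `U` are
invertible, and multiplying by an invertible matrix preserves rank.
-/

open Matrix

/-- The leading principal `K × K` submatrix `A(1:K, 1:K)`. -/
def leadBlk {F : Type} [Field F] {N : ℕ} (A : Matrix (Fin N) (Fin N) F) (K : ℕ)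
    (hK : K ≤ N) : Matrix (Fin K) (Fin K) F :=
  Matrix.of fun i j => A ⟨i.1, by have := i.isLt; omega⟩ ⟨j.1, by have := j.isLt; omega⟩

namespace Matrix

variable {R : Type*} {m n : Type*} {N K : ℕ}

theorem submatrix_mul_eq_mul_castLE [NonUnitalNonAssocSemiring R] (L U : Matrix (Fin N) (Fin N) R)
    (hK : K ≤ N) (r : m → Fin N) (c : n → Fin N)
    (h : ∀ i j (x : Fin N), K ≤ (x : ℕ) → L (r i) x * U x (c j) = 0) :
    (L * U).submatrix r c = L.submatrix r (Fin.castLE hK) * U.submatrix (Fin.castLE hK) c := by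
  ext i j
  refine (Fintype.sum_of_injective _ (Fin.castLE_injective hK) _ _ (fun x hx => h i j x ?_)
    (fun _ => rfl)).symm
  simpa [Fin.range_castLE] using hx

theorem IsUpperTriangular.submatrix_mul_eq_mul_castLE [NonUnitalNonAssocSemiring R]
    {L U : Matrix (Fin N) (Fin N) R} (hU : U.IsUpperTriangular) (hK : K ≤ N) (r : m → Fin N)
    {c : n → Fin N} (hc : ∀ j, (c j : ℕ) < K) :
    (L * U).submatrix r c = L.submatrix r (Fin.castLE hK) * U.submatrix (Fin.castLE hK) c :=
  Matrix.submatrix_mul_eq_mul_castLE L U hK r c fun _ j _ hx => by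
    rw [hU (show c j < _ from Fin.lt_def.mpr ((hc j).trans_le hx)), mul_zero]

theorem IsLowerTriangular.submatrix_mul_eq_mul_castLE [NonUnitalNonAssocSemiring R]
    {L U : Matrix (Fin N) (Fin N) R} (hL : L.IsLowerTriangular) (hK : K ≤ N) {r : m → Fin N}
    (hr : ∀ i, (r i : ℕ) < K) (c : n → Fin N) :
    (L * U).submatrix r c = L.submatrix r (Fin.castLE hK) * U.submatrix (Fin.castLE hK) c :=
  Matrix.submatrix_mul_eq_mul_castLE L U hK r c fun i _ _ hx => by
    rw [hL (OrderDual.toDual_lt_toDual.mpr (Fin.lt_def.mpr ((hr i).trans_le hx))), zero_mul]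

end Matrix

section Blocks

variable {F : Type} [Field F] {N K : ℕ} {L U : Matrix (Fin N) (Fin N) F}

theorem lowBlk_mul_of_isUpperTriangular (hU : U.IsUpperTriangular) (hK : K ≤ N) :
    lowBlk (L * U) K hK = lowBlk L K hK * leadBlk U K hK :=
  hU.submatrix_mul_eq_mul_castLE hK _ fun j => j.isLt

theorem leadBlk_mul_of_isUpperTriangular (hU : U.IsUpperTriangular) (hK : K ≤ N) :
    leadBlk (L * U) K hK = leadBlk L K hK * leadBlk U K hK :=
  hU.submatrix_mul_eq_mul_castLE hK _ fun j => j.isLt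

theorem upBlk_mul_of_isLowerTriangular (hL : L.IsLowerTriangular) (hK : K ≤ N) :
    upBlk (L * U) K hK = leadBlk L K hK * upBlk U K hK :=
  hL.submatrix_mul_eq_mul_castLE hK (fun i => i.isLt) _

theorem lowBlk_eq_zero_of_isUpperTriangular (hU : U.IsUpperTriangular) (hK : K ≤ N) :
    lowBlk U K hK = 0 := by
  ext i j
  exact hU (Fin.lt_def.mpr (show (j : ℕ) < K + i by omega))

theorem upBlk_eq_zero_of_isLowerTriangular (hL : L.IsLowerTriangular) (hK : K ≤ N) :
    upBlk L K hK = 0 := by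
  ext i j
  exact hL (OrderDual.toDual_lt_toDual.mpr (Fin.lt_def.mpr (show (i : ℕ) < K + j by omega)))

theorem isUnit_det_leadBlk_of_det_leadBlk_mul_ne_zero (hU : U.IsUpperTriangular) (hK : K ≤ N)
    (h : (leadBlk (L * U) K hK).det ≠ 0) :
    IsUnit (leadBlk L K hK).det ∧ IsUnit (leadBlk U K hK).det := by
  rw [leadBlk_mul_of_isUpperTriangular hU, det_mul] at h
  exact ⟨(left_ne_zero_of_mul h).isUnit, (right_ne_zero_of_mul h).isUnit⟩

theorem rank_lowBlk_mul_of_isUpperTriangular (hU : U.IsUpperTriangular) (hK : K ≤ N)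
    (hdet : IsUnit (leadBlk U K hK).det) :
    (lowBlk (L * U) K hK).rank = (lowBlk L K hK).rank := by
  rw [lowBlk_mul_of_isUpperTriangular hU, rank_mul_eq_left_of_isUnit_det _ _ hdet]

theorem rank_upBlk_mul_of_isLowerTriangular (hL : L.IsLowerTriangular) (hK : K ≤ N)
    (hdet : IsUnit (leadBlk L K hK).det) :
    (upBlk (L * U) K hK).rank = (upBlk U K hK).rank := by
  rw [upBlk_mul_of_isLowerTriangular hL, rank_mul_eq_right_of_isUnit_det _ _ hdet]

end Blocks

theorem lu_offdiag_rank_general {F : Type} [Field F] {N : ℕ}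
    (A L U : Matrix (Fin N) (Fin N) F)
    (hreg : ∀ (K : ℕ) (hK : K ≤ N), (leadBlk A K hK).det ≠ 0)
    (hLlow : ∀ i j : Fin N, i < j → L i j = 0)
    (hUup : ∀ i j : Fin N, j < i → U i j = 0)
    (hLU : A = L * U) :
    (∀ (K : ℕ) (_ : 1 ≤ K) (h2 : K < N),
      (lowBlk L K h2.le).rank = (lowBlk A K h2.le).rank ∧
      (upBlk U K h2.le).rank = (upBlk A K h2.le).rank) ∧
    (∀ rl ru : ℕ, IsQS A rl ru → IsQS L rl 0 ∧ IsQS U 0 ru) := by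
  subst hLU
  have hL : L.IsLowerTriangular := fun i j h => hLlow i j h
  have hU : U.IsUpperTriangular := fun i j h => hUup i j h
  have hrank : ∀ (K : ℕ) (_ : 1 ≤ K) (h2 : K < N),
      (lowBlk L K h2.le).rank = (lowBlk (L * U) K h2.le).rank ∧
      (upBlk U K h2.le).rank = (upBlk (L * U) K h2.le).rank := fun K _ h2 => by
    obtain ⟨hLK, hUK⟩ := isUnit_det_leadBlk_of_det_leadBlk_mul_ne_zero hU h2.le (hreg K h2.le)
    exact ⟨(rank_lowBlk_mul_of_isUpperTriangular hU h2.le hUK).symm,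
      (rank_upBlk_mul_of_isLowerTriangular hL h2.le hLK).symm⟩
  refine ⟨hrank, fun rl ru hA => ⟨fun K h1 h2 => ⟨?_, ?_⟩, fun K h1 h2 => ⟨?_, ?_⟩⟩⟩
  · exact (hrank K h1 h2).1 ▸ (hA K h1 h2).1
  · rw [upBlk_eq_zero_of_isLowerTriangular hL, rank_zero]
  · rw [lowBlk_eq_zero_of_isUpperTriangular hU, rank_zero]
  · exact (hrank K h1 h2).2 ▸ (hA K h1 h2).2

/-- for an LU factorization `A = L·U` of an invertible strongly regular
matrix, the lower off-diagonal ranks of `L` equal those of `A` and the upper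
off-diagonal ranks of `U` equal those of `A`; consequently if `A` is
`(rl, ru)`-quasiseparable then `L` is `(rl, 0)`- and `U` is `(0, ru)`-quasiseparable. -/
theorem lu_offdiag_rank {F : Type} [Field F] {N : ℕ}
    (A L U : Matrix (Fin N) (Fin N) F)
    (hreg : ∀ (K : ℕ) (hK : K ≤ N), (leadBlk A K hK).det ≠ 0)
    (hLlow : ∀ i j : Fin N, i < j → L i j = 0)
    (hLdiag : ∀ i : Fin N, L i i = 1)
    (hUup : ∀ i j : Fin N, j < i → U i j = 0)
    (hLU : A = L * U) :
    (∀ (K : ℕ) (_ : 1 ≤ K) (h2 : K < N),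
      (lowBlk L K h2.le).rank = (lowBlk A K h2.le).rank ∧
      (upBlk U K h2.le).rank = (upBlk A K h2.le).rank) ∧
    (∀ rl ru : ℕ, IsQS A rl ru → IsQS L rl 0 ∧ IsQS U 0 ru) :=
  lu_offdiag_rank_general A L U hreg hLlow hUup hLU
end

section
/- Let A be an invertible (r^l, r^u)-quasiseparable matrix partitioned conformally as [[A_{11}, A_{12}],[A_{21}, A_{22}]] with A_{11} invertible, where the partition is at index K. Then the Schur complement A_{22} − A_{21} A_{11}^{-1} A_{12} is (r^l, r^u)-quasiseparable (with respect to partitions of the trailing index set): for every K′ > K, the off-diagonal blocks of the Schur complement have rank at most r^l (lower) and r^u (upper), since the Schur complement equals the inverse of the trailing principal submatrix of A^{-1}. -/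
open Matrix

/-- The trailing principal submatrix `A(K+1:N, K+1:N)`. -/
def trailBlk {F : Type} [Field F] {N : ℕ} (A : Matrix (Fin N) (Fin N) F) (K : ℕ)
    (hK : K ≤ N) : Matrix (Fin (N - K)) (Fin (N - K)) F :=
  Matrix.of fun i j =>
    A ⟨K + i.1, by have := i.isLt; omega⟩ ⟨K + j.1, by have := j.isLt; omega⟩

/-! Write `S = A₂₂ - A₂₁ B A₁₂` with `B = A₁₁⁻¹` and `R = K+K'+1:N`. The lower block of `S` at `K'`
is `A(R, K+1:K+K') - A(R, 1:K) B A(1:K, K+1:K+K')`, so each of its columns is a linear combination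
of columns of `A(R, 1:K+K')`, the lower block of `A` at `K + K'`, whose rank is at most `rl`.
Dually for the upper blocks. -/

namespace Matrix

variable {R : Type*} [CommRing R] [StrongRankCondition R] {m ρ ι κ : Type*} [Fintype ρ]
  [Fintype ι]

theorem rank_submatrix_sub_submatrix_mul_le [Fintype κ] (X : Matrix m ρ R) (τ : κ → ρ) (σ : ι → ρ)
    (D : Matrix ι κ R) : (X.submatrix id τ - X.submatrix id σ * D).rank ≤ X.rank := by
  classical
  have hfactor : X.submatrix id τ - X.submatrix id σ * D
      = X * ((1 : Matrix ρ ρ R).submatrix id τ - (1 : Matrix ρ ρ R).submatrix id σ * D) := by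
    rw [Matrix.mul_sub, ← Matrix.mul_assoc]
    congr 2 <;> ext <;> simp [mul_apply, one_apply]
  rw [hfactor]
  exact rank_mul_le_left _ _

theorem rank_submatrix_sub_mul_submatrix_le [Fintype m] (X : Matrix ρ m R) (τ : κ → ρ)
    (σ : ι → ρ) (D : Matrix κ ι R) : (X.submatrix τ id - D * X.submatrix σ id).rank ≤ X.rank := by
  classical
  have hfactor : X.submatrix τ id - D * X.submatrix σ id
      = ((1 : Matrix ρ ρ R).submatrix τ id - D * (1 : Matrix ρ ρ R).submatrix σ id) * X := by
    rw [Matrix.sub_mul, Matrix.mul_assoc]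
    congr 2 <;> ext <;> simp [mul_apply, one_apply]
  rw [hfactor]
  exact rank_mul_le_right _ _

end Matrix

section

variable {F : Type} [Field F] {N : ℕ} (A : Matrix (Fin N) (Fin N) F) {K K' : ℕ} (hK : K ≤ N)
  (hK' : K' ≤ N - K) (B : Matrix (Fin K) (Fin K) F)

theorem lowBlk_trailBlk_sub_mul_eq :
    lowBlk (trailBlk A K hK - lowBlk A K hK * B * upBlk A K hK) K' hK' =
      let X := (lowBlk A (K + K') (by omega)).submatrix (Fin.cast (by omega)) id
      X.submatrix id (Fin.natAdd K) -
        X.submatrix id (Fin.castAdd K') * (B * (upBlk A K hK).submatrix id (Fin.castLE hK')) := by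
  ext i j
  simp only [lowBlk, trailBlk, upBlk, of_apply, Matrix.sub_apply, mul_apply, submatrix_apply,
    id_eq, Fin.val_cast, Fin.val_natAdd, Fin.val_castAdd, Fin.val_castLE, Finset.mul_sum,
    Finset.sum_mul, mul_assoc, add_assoc]
  rw [Finset.sum_comm]

theorem upBlk_trailBlk_sub_mul_eq :
    upBlk (trailBlk A K hK - lowBlk A K hK * B * upBlk A K hK) K' hK' =
      let Y := (upBlk A (K + K') (by omega)).submatrix id (Fin.cast (by omega))
      Y.submatrix (Fin.natAdd K) id -
        ((lowBlk A K hK).submatrix (Fin.castLE hK') id * B) * Y.submatrix (Fin.castAdd K') id := by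
  ext i j
  simp only [lowBlk, trailBlk, upBlk, of_apply, Matrix.sub_apply, mul_apply, submatrix_apply,
    id_eq, Fin.val_cast, Fin.val_natAdd, Fin.val_castAdd, Fin.val_castLE, Finset.sum_mul,
    mul_assoc, add_assoc]

end

theorem schur_isQS_general {F : Type} [Field F] {N : ℕ}
    (A : Matrix (Fin N) (Fin N) F) (rl ru K : ℕ) (hK : K < N)
    (hQS : IsQS A rl ru) :
    IsQS (trailBlk A K hK.le - lowBlk A K hK.le * (leadBlk A K hK.le)⁻¹ * upBlk A K hK.le)
      rl ru := by
  intro K' _ hK'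
  obtain ⟨hlow, hup⟩ := hQS (K + K') (by omega) (by omega)
  constructor
  · rw [lowBlk_trailBlk_sub_mul_eq]
    exact (rank_submatrix_sub_submatrix_mul_le _ _ _ _).trans
      ((rank_submatrix_le _ _ _).trans hlow)
  · rw [upBlk_trailBlk_sub_mul_eq]
    exact (rank_submatrix_sub_mul_submatrix_le _ _ _ _).trans
      ((rank_submatrix_le _ _ _).trans hup)

/-- the Schur complement of an invertible leading block of an invertible
`(rl, ru)`-quasiseparable matrix is itself `(rl, ru)`-quasiseparable. -/
theorem schur_isQS {F : Type} [Field F] {N : ℕ}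
    (A : Matrix (Fin N) (Fin N) F) (rl ru K : ℕ) (hK1 : 1 ≤ K) (hK : K < N)
    (hA : IsUnit A.det) (h11 : IsUnit (leadBlk A K hK.le).det)
    (hQS : IsQS A rl ru) :
    IsQS (trailBlk A K hK.le - lowBlk A K hK.le * (leadBlk A K hK.le)⁻¹ * upBlk A K hK.le)
      rl ru :=
  schur_isQS_general A rl ru K hK hQS
end
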